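/- If $X \overset{d}{=} e^{-t/2} X_0 + \sqrt{1-e^{-t}}\,\epsilon$ where $X_0$ has sub-Gaussian tails (in particular $\mathbb{E}\|X_0\|^2 < \infty$) and $\epsilon \sim N(0, I_d)$ is independent of $X_0$, then the total variation distance between the law of $X(t)$ and $N(0, I_d)$ satisfies $d_{TV}(\mathcal{L}(X(t)), N(0,I_d)) \leq C e^{-t/2}$ for some constant $C$ depending only on the law of $X_0$, hence $X(t)$ converges to $N(0, I_d)$ as $t \to \infty$. -/

import Mathlib

open MeasureTheory ProbabilityTheory Filter

/-- Total variation distance between two measures: the supremum over measurable sets `A`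
of `|μ A - ν A|`. -/
noncomputable def tvDist {α : Type*} [MeasurableSpace α] (μ ν : Measure α) : ℝ :=
  ⨆ A : {s : Set α // MeasurableSet s}, |(μ A).toReal - (ν A).toReal|

/-!
Write `a = e^{-t/2}` and `b = √(1 - e^{-t})`, so that `a² + b² = 1`. By independence, the law of
`a X₀ + b ε` is the convolution of the law of `a X₀` with `N(0, b² I)`, and likewise
`N(0, 1) = N(0, a²) ∗ N(0, b²)` in each coordinate. A convolution `ρ ∗ μ` is a mixture of
translates of `μ`, so its total variation distance to `μ` is at most the `ρ`-average of the
distance between `μ` and its translates. For `μ = N(0, b²)` a translation by `m` costs at most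
`|m| / √(2π b²)`: the two densities cross at `m / 2` and are bounded by `1 / √(2π b²)`. Comparing
both the law of `X(t)` and `N(0, I)` with `N(0, b² I)` (the latter coordinatewise, since total
variation is subadditive on products) gives a bound `a (E‖X₀‖₁ + d E|Z|) / √(2π b²)`, which is
`O(e^{-t/2})` for `t ≥ 1`; for `t ≤ 1` the trivial bound `1` suffices.
-/

open Real
open scoped NNReal ENNReal

section TotalVariation

variable {α β : Type*} [MeasurableSpace α] [MeasurableSpace β]

lemma tvDist_nonneg (μ ν : Measure α) : 0 ≤ tvDist μ ν :=
  Real.iSup_nonneg fun _ => abs_nonneg _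

lemma tvDist_le_of_forall {μ ν : Measure α} {B : ℝ}
    (h : ∀ A, MeasurableSet A → |(μ A).toReal - (ν A).toReal| ≤ B) : tvDist μ ν ≤ B :=
  have : Nonempty {s : Set α // MeasurableSet s} := ⟨⟨∅, .empty⟩⟩
  ciSup_le fun A => h A.1 A.2

lemma tvDist_comm (μ ν : Measure α) : tvDist μ ν = tvDist ν μ := by
  simp only [tvDist, abs_sub_comm]

lemma tvDist_self (μ : Measure α) : tvDist μ μ = 0 := by
  simp [tvDist]

lemma abs_toReal_sub_le (μ ν : Measure α) [IsFiniteMeasure μ] [IsFiniteMeasure ν] (A : Set α) :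
    |(μ A).toReal - (ν A).toReal| ≤ max (μ.real .univ) (ν.real .univ) := by
  have hμ : (μ A).toReal ≤ μ.real .univ := measureReal_mono (Set.subset_univ A)
  have hν : (ν A).toReal ≤ ν.real .univ := measureReal_mono (Set.subset_univ A)
  have := le_max_left (μ.real .univ) (ν.real .univ)
  have := le_max_right (μ.real .univ) (ν.real .univ)
  have : 0 ≤ (μ A).toReal := ENNReal.toReal_nonneg
  have : 0 ≤ (ν A).toReal := ENNReal.toReal_nonneg
  exact abs_sub_le_iff.2 ⟨by linarith, by linarith⟩

lemma abs_sub_le_tvDist (μ ν : Measure α) [IsFiniteMeasure μ] [IsFiniteMeasure ν] {A : Set α}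
    (hA : MeasurableSet A) : |(μ A).toReal - (ν A).toReal| ≤ tvDist μ ν :=
  le_ciSup (f := fun A : {s : Set α // MeasurableSet s} => |(μ A).toReal - (ν A).toReal|)
    ⟨_, Set.forall_mem_range.2 fun B => abs_toReal_sub_le μ ν B⟩ ⟨A, hA⟩

lemma tvDist_le_one (μ ν : Measure α) [IsProbabilityMeasure μ] [IsProbabilityMeasure ν] :
    tvDist μ ν ≤ 1 :=
  tvDist_le_of_forall fun A _ => by simpa using abs_toReal_sub_le μ ν A

lemma tvDist_triangle (μ ν ρ : Measure α) [IsFiniteMeasure μ] [IsFiniteMeasure ν]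
    [IsFiniteMeasure ρ] : tvDist μ ρ ≤ tvDist μ ν + tvDist ν ρ :=
  tvDist_le_of_forall fun _ hA => (abs_sub_le _ _ _).trans
    (add_le_add (abs_sub_le_tvDist μ ν hA) (abs_sub_le_tvDist ν ρ hA))

lemma tvDist_map_le (μ ν : Measure α) [IsFiniteMeasure μ] [IsFiniteMeasure ν] {f : α → β}
    (hf : Measurable f) : tvDist (μ.map f) (ν.map f) ≤ tvDist μ ν :=
  tvDist_le_of_forall fun _ hA => by
    simpa only [Measure.map_apply hf hA] using abs_sub_le_tvDist μ ν (hf hA)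

lemma abs_toReal_lintegral_sub_le {ρ : Measure β} [IsFiniteMeasure ρ] {f g : β → ℝ≥0∞}
    (hf : Measurable f) (hg : Measurable g) (hf₁ : ∀ y, f y ≤ 1) (hg₁ : ∀ y, g y ≤ 1)
    {δ : β → ℝ} (hδ : Integrable δ ρ) (h : ∀ y, |(f y).toReal - (g y).toReal| ≤ δ y) :
    |(∫⁻ y, f y ∂ρ).toReal - (∫⁻ y, g y ∂ρ).toReal| ≤ ∫ y, δ y ∂ρ := by
  have hfin {k : β → ℝ≥0∞} (hk : Measurable k) (hk₁ : ∀ y, k y ≤ 1) :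
      ∫⁻ y, k y ∂ρ ≠ ∞ := by
    refine ne_top_of_le_ne_top (measure_ne_top ρ .univ) ?_
    simpa using lintegral_mono hk₁
  have hint {k : β → ℝ≥0∞} (hk : Measurable k) (hk₁ : ∀ y, k y ≤ 1) :
      Integrable (fun y => (k y).toReal) ρ :=
    integrable_toReal_of_lintegral_ne_top hk.aemeasurable (hfin hk hk₁)
  rw [← integral_toReal hf.aemeasurable (ae_lt_top hf (hfin hf hf₁)),
    ← integral_toReal hg.aemeasurable (ae_lt_top hg (hfin hg hg₁)),
    ← integral_sub (hint hf hf₁) (hint hg hg₁)]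
  exact (abs_integral_le_integral_abs).trans
    (integral_mono ((hint hf hf₁).sub (hint hg hg₁)).abs hδ h)

lemma tvDist_prod_left_le (ρ : Measure β) (μ ν : Measure α) [IsProbabilityMeasure ρ]
    [IsProbabilityMeasure μ] [IsProbabilityMeasure ν] :
    tvDist (ρ.prod μ) (ρ.prod ν) ≤ tvDist μ ν :=
  tvDist_le_of_forall fun A hA => by
    rw [Measure.prod_apply hA, Measure.prod_apply hA]
    simpa using abs_toReal_lintegral_sub_le (ρ := ρ) (measurable_measure_prodMk_left hA)
      (measurable_measure_prodMk_left hA) (fun _ => prob_le_one) (fun _ => prob_le_one)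
      (integrable_const (tvDist μ ν))
      (fun x => abs_sub_le_tvDist μ ν (measurable_prodMk_left hA))

lemma tvDist_prod_le (μ₁ ν₁ : Measure α) (μ₂ ν₂ : Measure β) [IsProbabilityMeasure μ₁]
    [IsProbabilityMeasure ν₁] [IsProbabilityMeasure μ₂] [IsProbabilityMeasure ν₂] :
    tvDist (μ₁.prod μ₂) (ν₁.prod ν₂) ≤ tvDist μ₁ ν₁ + tvDist μ₂ ν₂ := by
  have hswap : tvDist (μ₁.prod μ₂) (ν₁.prod μ₂) ≤ tvDist μ₁ ν₁ := by
    rw [← Measure.prod_swap (μ := μ₂), ← Measure.prod_swap (μ := μ₂)]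
    exact (tvDist_map_le _ _ measurable_swap).trans (tvDist_prod_left_le μ₂ μ₁ ν₁)
  exact (tvDist_triangle _ (ν₁.prod μ₂) _).trans
    (add_le_add hswap (tvDist_prod_left_le ν₁ μ₂ ν₂))

lemma tvDist_pi_le_sum {n : ℕ} {α : Fin n → Type*} [∀ i, MeasurableSpace (α i)]
    (μ ν : ∀ i, Measure (α i)) [∀ i, IsProbabilityMeasure (μ i)]
    [∀ i, IsProbabilityMeasure (ν i)] :
    tvDist (Measure.pi μ) (Measure.pi ν) ≤ ∑ i, tvDist (μ i) (ν i) := by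
  induction n with
  | zero => simp [Subsingleton.elim μ ν, tvDist_self]
  | succ n ih =>
    let e := MeasurableEquiv.piFinSuccAbove α 0
    rw [← ((measurePreserving_piFinSuccAbove μ 0).symm e).map_eq,
      ← ((measurePreserving_piFinSuccAbove ν 0).symm e).map_eq, Fin.sum_univ_succAbove _ 0]
    exact (tvDist_map_le _ _ e.symm.measurable).trans
      ((tvDist_prod_le _ _ _ _).trans (add_le_add le_rfl (ih _ _)))

lemma tvDist_conv_le {E : Type*} [AddMonoid E] [MeasurableSpace E] [MeasurableAdd₂ E]
    (ρ μ : Measure E) [IsProbabilityMeasure ρ] [IsProbabilityMeasure μ] {δ : E → ℝ}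
    (hδ : Integrable δ ρ) (h : ∀ y, tvDist (μ.map (y + ·)) μ ≤ δ y) :
    tvDist (ρ ∗ μ) μ ≤ ∫ y, δ y ∂ρ :=
  tvDist_le_of_forall fun A hA => by
    have hA' : MeasurableSet ((fun p : E × E => p.1 + p.2) ⁻¹' A) := measurable_add hA
    have hμA : μ A = ∫⁻ _, μ A ∂ρ := by simp
    rw [Measure.conv, Measure.map_apply measurable_add hA, Measure.prod_apply hA', hμA]
    refine abs_toReal_lintegral_sub_le (measurable_measure_prodMk_left hA') measurable_const
      (fun _ => prob_le_one) (fun _ => prob_le_one) hδ fun y => ?_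
    have := abs_sub_le_tvDist (μ.map (y + ·)) μ hA
    rw [Measure.map_apply (measurable_const_add y) hA] at this
    exact this.trans (h y)

lemma measureReal_sub_le_of_hahn {μ ν : Measure α} [IsFiniteMeasure μ] [IsFiniteMeasure ν]
    {H : Set α} (hH : MeasurableSet H) (hpos : ∀ B ⊆ H, MeasurableSet B → ν B ≤ μ B)
    (hneg : ∀ B ⊆ Hᶜ, MeasurableSet B → μ B ≤ ν B) {S : Set α} (hS : MeasurableSet S) :
    μ.real S - ν.real S ≤ μ.real H - ν.real H := by
  have hSH : μ.real (S \ H) ≤ ν.real (S \ H) := ENNReal.toReal_mono (measure_ne_top ν _)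
    (hneg _ (fun _ hx => hx.2) (hS.diff hH))
  have hHS : ν.real (H \ S) ≤ μ.real (H \ S) := ENNReal.toReal_mono (measure_ne_top μ _)
    (hpos _ Set.sdiff_subset (hH.diff hS))
  have := measureReal_inter_add_sdiff (μ := μ) (s := S) hH
  have := measureReal_inter_add_sdiff (μ := ν) (s := S) hH
  have := measureReal_inter_add_sdiff (μ := μ) (s := H) hS
  have := measureReal_inter_add_sdiff (μ := ν) (s := H) hS
  rw [Set.inter_comm H S] at *
  linarith

lemma tvDist_le_of_hahn {μ ν : Measure α} [IsProbabilityMeasure μ] [IsProbabilityMeasure ν]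
    {H : Set α} (hH : MeasurableSet H) (hpos : ∀ B ⊆ H, MeasurableSet B → ν B ≤ μ B)
    (hneg : ∀ B ⊆ Hᶜ, MeasurableSet B → μ B ≤ ν B) :
    tvDist μ ν ≤ μ.real H - ν.real H := by
  refine tvDist_le_of_forall fun S hS => abs_sub_le_iff.2 ⟨?_, ?_⟩
  · exact measureReal_sub_le_of_hahn hH hpos hneg hS
  · change ν.real S - μ.real S ≤ _
    have := measureReal_sub_le_of_hahn hH.compl hneg (by simpa using hpos) hS
    rw [probReal_compl_eq_one_sub hH, probReal_compl_eq_one_sub hH] at this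
    linarith

end TotalVariation

section Gaussian

open Set

lemma gaussianPDFReal_le_inv_sqrt (m : ℝ) (v : ℝ≥0) (x : ℝ) :
    gaussianPDFReal m v x ≤ (√(2 * π * v))⁻¹ := by
  refine mul_le_of_le_one_right (by positivity) (exp_le_one_iff.2 ?_)
  exact div_nonpos_of_nonpos_of_nonneg (neg_nonpos.2 (sq_nonneg _)) (by positivity)

lemma gaussianReal_le_ofReal_mul_volume (m : ℝ) {v : ℝ≥0} (hv : v ≠ 0) (s : Set ℝ) :
    gaussianReal m v s ≤ ENNReal.ofReal (√(2 * π * v))⁻¹ * volume s := by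
  rw [gaussianReal_apply m hv, ← setLIntegral_const]
  exact lintegral_mono fun x => ENNReal.ofReal_le_ofReal (gaussianPDFReal_le_inv_sqrt m v x)

lemma gaussianReal_le_gaussianReal_of_sq_le {m₁ m₂ : ℝ} {v : ℝ≥0} (hv : v ≠ 0) {B : Set ℝ}
    (h : ∀ x ∈ B, (x - m₂) ^ 2 ≤ (x - m₁) ^ 2) : gaussianReal m₁ v B ≤ gaussianReal m₂ v B := by
  rw [gaussianReal_apply m₁ hv, gaussianReal_apply m₂ hv]
  refine setLIntegral_mono (measurable_gaussianPDF _ _) fun x hx => ENNReal.ofReal_le_ofReal ?_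
  refine mul_le_mul_of_nonneg_left (exp_le_exp.2 ?_) (by positivity)
  exact div_le_div_of_nonneg_right (neg_le_neg (h x hx)) (by positivity)

lemma tvDist_gaussianReal_le_abs_mul (m : ℝ) {v : ℝ≥0} (hv : v ≠ 0) :
    tvDist (gaussianReal m v) (gaussianReal 0 v) ≤ |m| * (√(2 * π * v))⁻¹ := by
  wlog hm : 0 ≤ m generalizing m
  · calc tvDist (gaussianReal m v) (gaussianReal 0 v)
        = tvDist ((gaussianReal (-m) v).map (- ·)) ((gaussianReal 0 v).map (- ·)) := by
          rw [gaussianReal_map_neg, gaussianReal_map_neg, neg_neg, neg_zero]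
      _ ≤ tvDist (gaussianReal (-m) v) (gaussianReal 0 v) := tvDist_map_le _ _ measurable_neg
      _ ≤ |m| * (√(2 * π * v))⁻¹ := by simpa using this (-m) (by linarith)
  -- the densities of `N(m, v)` and `N(0, v)` cross at `m / 2`
  refine (tvDist_le_of_hahn (H := Ioi (m / 2)) measurableSet_Ioi
    (fun B hB _ => gaussianReal_le_gaussianReal_of_sq_le hv fun x hx => ?_)
    (fun B hB _ => gaussianReal_le_gaussianReal_of_sq_le hv fun x hx => ?_)).trans ?_
  · have : m / 2 < x := hB hx
    nlinarith
  · have : x ≤ m / 2 := not_lt.1 (hB hx)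
    nlinarith
  have hshift :
      (gaussianReal m v).real (Ioi (m / 2)) = (gaussianReal 0 v).real (Ioi (-(m / 2))) := by
    rw [← zero_add m, ← gaussianReal_map_add_const, map_measureReal_apply (measurable_add_const _)
      measurableSet_Ioi, preimage_add_const_Ioi]
    ring_nf
  have hsplit : (gaussianReal 0 v).real (Ioi (-(m / 2)))
      = (gaussianReal 0 v).real (Ioc (-(m / 2)) (m / 2))
        + (gaussianReal 0 v).real (Ioi (m / 2)) := by
    rw [← measureReal_union Ioc_disjoint_Ioi_same measurableSet_Ioi,
      Ioc_union_Ioi_eq_Ioi (by linarith)]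
  have hband : (gaussianReal 0 v).real (Ioc (-(m / 2)) (m / 2)) ≤ m * (√(2 * π * v))⁻¹ := by
    have := gaussianReal_le_ofReal_mul_volume 0 hv (Ioc (-(m / 2)) (m / 2))
    rw [Real.volume_Ioc, ← ENNReal.ofReal_mul (by positivity), show m / 2 - -(m / 2) = m by ring,
      mul_comm] at this
    have := ENNReal.toReal_mono ENNReal.ofReal_ne_top this
    rwa [ENNReal.toReal_ofReal (by positivity)] at this
  rw [abs_of_nonneg hm]
  linarith

lemma tvDist_gaussianReal_gaussianReal_one_le {a b : ℝ} (hb : b ≠ 0) (hab : a ^ 2 + b ^ 2 = 1) :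
    tvDist (gaussianReal 0 ⟨b ^ 2, sq_nonneg b⟩) (gaussianReal 0 1)
      ≤ |a| * (∫ z, |z| ∂gaussianReal 0 1) * (√(2 * π * b ^ 2))⁻¹ := by
  set V : ℝ≥0 := ⟨b ^ 2, sq_nonneg b⟩
  have hV : V ≠ 0 := fun h => hb (pow_eq_zero_iff two_ne_zero |>.1 (congrArg NNReal.toReal h))
  have hconv : (gaussianReal 0 1).map (a * ·) ∗ gaussianReal 0 V = gaussianReal 0 1 := by
    rw [gaussianReal_map_const_mul, gaussianReal_conv_gaussianReal, mul_zero, zero_add, mul_one]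
    exact congrArg _ (NNReal.eq hab)
  have hmeas : Measurable (a * · : ℝ → ℝ) := measurable_const_mul a
  have : IsProbabilityMeasure ((gaussianReal 0 1).map (a * ·)) :=
    Measure.isProbabilityMeasure_map hmeas.aemeasurable
  have hid : Integrable id (gaussianReal 0 1) :=
    memLp_one_iff_integrable.1 (by simpa using memLp_id_gaussianReal (μ := 0) (v := 1) 1)
  have habs : Integrable (fun z : ℝ => |z|) (gaussianReal 0 1) := hid.abs
  have hδ : Integrable (fun y : ℝ => |y| * (√(2 * π * V))⁻¹) ((gaussianReal 0 1).map (a * ·)) := by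
    refine (integrable_map_measure (by fun_prop) hmeas.aemeasurable).2 ?_
    simpa [Function.comp_def, abs_mul, mul_assoc] using (habs.const_mul |a|).mul_const _
  have key := tvDist_conv_le _ _ hδ fun y => by
    rw [gaussianReal_map_const_add, zero_add]
    exact tvDist_gaussianReal_le_abs_mul y hV
  rw [hconv, integral_mul_const, integral_map hmeas.aemeasurable (by fun_prop)] at key
  simp only [abs_mul, integral_const_mul, V] at key
  rw [tvDist_comm]
  exact key

end Gaussian

section GaussianProduct

variable {v : ℝ≥0} {n : ℕ}

lemma pi_gaussianReal_map_const_add (y : Fin n → ℝ) :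
    (Measure.pi fun _ : Fin n => gaussianReal 0 v).map (y + ·)
      = Measure.pi fun i => gaussianReal (y i) v := by
  have := Measure.pi_map_pi (μ := fun _ : Fin n => gaussianReal 0 v)
    (fun i => (measurable_const_add (y i)).aemeasurable)
  simp only [gaussianReal_map_const_add, zero_add] at this
  exact this

lemma pi_gaussianReal_map_const_smul (c : ℝ) :
    (Measure.pi fun _ : Fin n => gaussianReal 0 1).map (c • ·)
      = Measure.pi fun _ => gaussianReal 0 ⟨c ^ 2, sq_nonneg c⟩ := by
  have := Measure.pi_map_pi (μ := fun _ : Fin n => gaussianReal 0 1)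
    (fun _ => (measurable_const_mul c).aemeasurable)
  simp only [gaussianReal_map_const_mul, mul_zero, mul_one] at this
  exact this

lemma tvDist_pi_gaussianReal_map_const_add_le (y : Fin n → ℝ) (hv : v ≠ 0) :
    tvDist ((Measure.pi fun _ : Fin n => gaussianReal 0 v).map (y + ·))
        (Measure.pi fun _ => gaussianReal 0 v) ≤ (∑ i, |y i|) * (√(2 * π * v))⁻¹ := by
  rw [pi_gaussianReal_map_const_add, Finset.sum_mul]
  exact (tvDist_pi_le_sum _ _).trans
    (Finset.sum_le_sum fun i _ => tvDist_gaussianReal_le_abs_mul (y i) hv)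

end GaussianProduct

lemma tvDist_map_smul_add_smul_le {Ω : Type*} [MeasurableSpace Ω] (P : Measure Ω)
    [IsProbabilityMeasure P] {d : ℕ} {X ε : Ω → Fin d → ℝ} (hX : Measurable X)
    (hε : Measurable ε) (hεd : P.map ε = Measure.pi fun _ => gaussianReal 0 1)
    (hindep : IndepFun X ε P) (hXint : Integrable X P) {a b : ℝ} (hb : b ≠ 0)
    (hab : a ^ 2 + b ^ 2 = 1) :
    tvDist (P.map fun ω => a • X ω + b • ε ω) (Measure.pi fun _ => gaussianReal 0 1)
      ≤ |a| * (∫ ω, ∑ i, |X ω i| ∂P + d * ∫ z, |z| ∂gaussianReal 0 1)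
        * (√(2 * π * b ^ 2))⁻¹ := by
  set V : ℝ≥0 := ⟨b ^ 2, sq_nonneg b⟩
  have hV : V ≠ 0 := fun h => hb (pow_eq_zero_iff two_ne_zero |>.1 (congrArg NNReal.toReal h))
  have haX : Measurable (a • X) := hX.const_smul a
  have hlaw : P.map (fun ω => a • X ω + b • ε ω)
      = P.map (a • X) ∗ Measure.pi fun _ => gaussianReal 0 V := by
    have hind : IndepFun (a • X) (b • ε) P :=
      hindep.comp (measurable_const_smul a) (measurable_const_smul b)
    rw [show (fun ω => a • X ω + b • ε ω) = a • X + b • ε from rfl,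
      hind.map_add_eq_map_conv_map haX (hε.const_smul b), show b • ε = (b • ·) ∘ ε from rfl,
      ← Measure.map_map (measurable_const_smul b) hε, hεd, pi_gaussianReal_map_const_smul]
  have : IsProbabilityMeasure (P.map (a • X)) := Measure.isProbabilityMeasure_map haX.aemeasurable
  have hδ : Integrable (fun y : Fin d → ℝ => (∑ i, |y i|) * (√(2 * π * V))⁻¹) (P.map (a • X)) := by
    refine (integrable_map_measure (Continuous.aestronglyMeasurable (by fun_prop))
      haX.aemeasurable).2 ?_
    exact (integrable_finsetSum _ fun i _ => ((hXint.eval i).const_mul a).abs).mul_const _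
  have hmix := tvDist_conv_le _ _ hδ fun y => tvDist_pi_gaussianReal_map_const_add_le y hV
  rw [← hlaw, integral_mul_const, integral_map haX.aemeasurable
    (Continuous.aestronglyMeasurable (by fun_prop)), show (V : ℝ) = b ^ 2 from rfl] at hmix
  have hvar : tvDist (Measure.pi fun _ : Fin d => gaussianReal 0 V)
      (Measure.pi fun _ => gaussianReal 0 1)
        ≤ d * (|a| * (∫ z, |z| ∂gaussianReal 0 1) * (√(2 * π * b ^ 2))⁻¹) := by
    simpa using (tvDist_pi_le_sum (fun _ : Fin d => gaussianReal 0 V) _).trans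
      (Finset.sum_le_sum fun i _ => tvDist_gaussianReal_gaussianReal_one_le hb hab)
  have hsum : ∫ ω, ∑ i, |(a • X) ω i| ∂P = |a| * ∫ ω, ∑ i, |X ω i| ∂P := by
    simp [abs_mul, ← Finset.mul_sum, integral_const_mul]
  calc _ ≤ _ := tvDist_triangle _ (Measure.pi fun _ => gaussianReal 0 V) _
    _ ≤ _ := add_le_add hmix hvar
    _ = _ := by rw [hsum]; ring

lemma tvDist_ou_le {Ω : Type*} [MeasurableSpace Ω] (P : Measure Ω) [IsProbabilityMeasure P]
    {d : ℕ} {X ε : Ω → Fin d → ℝ} (hX : Measurable X) (hε : Measurable ε)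
    (hεd : P.map ε = Measure.pi fun _ => gaussianReal 0 1) (hindep : IndepFun X ε P)
    (hXint : Integrable X P) (t : ℝ) :
    tvDist (P.map fun ω i => exp (-t / 2) * X ω i + √(1 - exp (-t)) * ε ω i)
        (Measure.pi fun _ => gaussianReal 0 1)
      ≤ (∫ ω, ∑ i, |X ω i| ∂P + d * ∫ z, |z| ∂gaussianReal 0 1 + exp 1) * exp (-t / 2) := by
  set C := ∫ ω, ∑ i, |X ω i| ∂P + d * ∫ z, |z| ∂gaussianReal 0 1
  have hC : 0 ≤ C := by
    have : 0 ≤ ∫ ω, ∑ i, |X ω i| ∂P := integral_nonneg fun ω => by positivity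
    have : 0 ≤ ∫ z, |z| ∂gaussianReal 0 1 := integral_nonneg fun z => abs_nonneg z
    positivity
  rcases le_total 1 t with ht | ht
  · have hexp : exp (-t) ≤ 1 / 2 :=
      (exp_le_exp.2 (by linarith)).trans exp_neg_one_lt_half.le
    have hb : √(1 - exp (-t)) ^ 2 = 1 - exp (-t) := sq_sqrt (by linarith)
    have hab : exp (-t / 2) ^ 2 + √(1 - exp (-t)) ^ 2 = 1 := by
      rw [hb, ← exp_nat_mul]
      ring_nf
    have hc : (√(2 * π * √(1 - exp (-t)) ^ 2))⁻¹ ≤ 1 :=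
      inv_le_one_of_one_le₀ (one_le_sqrt.2 (by rw [hb]; nlinarith [pi_gt_three]))
    have key := tvDist_map_smul_add_smul_le P hX hε hεd hindep hXint
      (sqrt_ne_zero'.2 (by linarith)) hab
    rw [abs_of_pos (exp_pos _)] at key
    calc _ ≤ _ := key
      _ ≤ exp (-t / 2) * C * 1 := by gcongr
      _ ≤ _ := by nlinarith [exp_pos (-t / 2), exp_pos 1]
  · have : IsProbabilityMeasure (P.map fun ω i => exp (-t / 2) * X ω i
        + √(1 - exp (-t)) * ε ω i) := Measure.isProbabilityMeasure_map (by fun_prop)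
    calc _ ≤ 1 := tvDist_le_one _ _
      _ ≤ exp 1 * exp (-t / 2) := by rw [← exp_add]; exact one_le_exp (by linarith)
      _ ≤ _ := by nlinarith [exp_pos (-t / 2)]

theorem ou_tv_convergence_general
    {Ω : Type*} [MeasurableSpace Ω] (P : Measure Ω) [IsProbabilityMeasure P]
    (d : ℕ) (X₀ : Ω → (Fin d → ℝ)) (ε : Ω → (Fin d → ℝ))
    (hX₀ : Measurable X₀) (hε : Measurable ε)
    (hεd : Measure.map ε P = Measure.pi (fun _ => gaussianReal 0 1))
    (hindep : IndepFun X₀ ε P)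
    (hmom : MemLp X₀ 2 P) :
    ∃ C : ℝ, (∀ t : ℝ, 0 ≤ t →
        tvDist
          (Measure.map
            (fun ω => fun i =>
              Real.exp (-t / 2) * X₀ ω i + Real.sqrt (1 - Real.exp (-t)) * ε ω i) P)
          (Measure.pi (fun _ : Fin d => gaussianReal 0 1))
        ≤ C * Real.exp (-t / 2))
      ∧ Tendsto
          (fun t : ℝ =>
            tvDist
              (Measure.map
                (fun ω => fun i =>
                  Real.exp (-t / 2) * X₀ ω i + Real.sqrt (1 - Real.exp (-t)) * ε ω i) P)
              (Measure.pi (fun _ : Fin d => gaussianReal 0 1)))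
          atTop (nhds 0) := by
  have hbound := tvDist_ou_le P hX₀ hε hεd hindep (hmom.integrable one_le_two)
  refine ⟨_, fun t _ => hbound t, squeeze_zero (fun _ => tvDist_nonneg _ _) hbound ?_⟩
  simpa using (tendsto_exp_atBot.comp
    (tendsto_neg_atTop_atBot.atBot_div_const two_pos)).const_mul _

/-- If `X(t) ≝ e^{-t/2} X₀ + √(1-e^{-t}) ε` where `X₀` has sub-Gaussian tails (in
particular `E‖X₀‖² < ∞`) and `ε ∼ N(0, I_d)` is independent of `X₀`, then
`d_TV(ℒ(X(t)), N(0,I_d)) ≤ C e^{-t/2}` for some constant `C` depending only on the law of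
`X₀`; hence `X(t)` converges to `N(0, I_d)` in total variation as `t → ∞`. -/
theorem ou_tv_convergence
    {Ω : Type*} [MeasurableSpace Ω] (P : Measure Ω) [IsProbabilityMeasure P]
    (d : ℕ) (X₀ : Ω → (Fin d → ℝ)) (ε : Ω → (Fin d → ℝ))
    (hX₀ : Measurable X₀) (hε : Measurable ε)
    (hεd : Measure.map ε P = Measure.pi (fun _ => gaussianReal 0 1))
    (hindep : IndepFun X₀ ε P)
    -- sub-Gaussian tails of `X₀`:
    (hsubG : ∃ c > (0:ℝ), ∃ C₀ > (0:ℝ), ∀ r : ℝ, 0 ≤ r →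
      (P {ω | r < ‖(WithLp.equiv 2 (Fin d → ℝ)).symm (X₀ ω)‖}).toReal
        ≤ C₀ * Real.exp (-c * r ^ 2))
    (hmom : MemLp X₀ 2 P) :
    ∃ C : ℝ, (∀ t : ℝ, 0 ≤ t →
        tvDist
          (Measure.map
            (fun ω => fun i =>
              Real.exp (-t / 2) * X₀ ω i + Real.sqrt (1 - Real.exp (-t)) * ε ω i) P)
          (Measure.pi (fun _ : Fin d => gaussianReal 0 1))
        ≤ C * Real.exp (-t / 2))
      ∧ Tendsto
          (fun t : ℝ =>
            tvDist
              (Measure.map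
                (fun ω => fun i =>
                  Real.exp (-t / 2) * X₀ ω i + Real.sqrt (1 - Real.exp (-t)) * ε ω i) P)
              (Measure.pi (fun _ : Fin d => gaussianReal 0 1)))
          atTop (nhds 0) :=
  ou_tv_convergence_general P d X₀ ε hX₀ hε hεd hindep hmom
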